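/- If S is a nonrepetitive (square-free) and palindrome-free sequence over q symbols, then the sequence S^{(k)}, obtained from S by replacing each symbol t by the block t^{(0)}, t^{(1)}, ..., t^{(k−1)} of k new symbols, is k-special; consequently, taking S nonrepetitive and palindrome-free on 4 symbols yields π'(T_k) ≤ 4k. -/

import Mathlib

/-- A repetition: a nonempty sequence whose first half equals its second half. -/
def IsRepetition {α : Type*} (l : List α) : Prop := ∃ w : List α, w ≠ [] ∧ l = w ++ w

/-- An edge-coloring is nonrepetitive if no path carries a repetitive color sequence. -/
def NonrepEdgeColoring {V α : Type*} (G : SimpleGraph V) (c : Sym2 V → α) : Prop :=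
  ∀ u v : V, ∀ p : G.Walk u v, p.IsPath → ¬ IsRepetition (p.edges.map c)

/-- The Thue chromatic index: minimum number of colors in a nonrepetitive edge-coloring. -/
noncomputable def thueIdx {V : Type*} (G : SimpleGraph V) : ℕ :=
  sInf {n | ∃ c : Sym2 V → ℕ, (∀ e ∈ G.edgeSet, c e < n) ∧ NonrepEdgeColoring G c}

/-- `i 1, …, i (2r)` (1-indexed) is a `k`-bad index sequence for the 1-indexed sequence `S`,
with turning index `m`: the symbols form a repetition, the indices strictly decrease up to
position `m` and then strictly increase, consecutive indices differ by at most `k`, and the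
gap at the turn is strictly less than `k` when the turn is internal. -/
def KBadIdx {α : Type*} (k : ℕ) (S : ℕ → α) (r m : ℕ) (i : ℕ → ℕ) : Prop :=
  1 ≤ r ∧ 1 < m ∧ m ≤ 2 * r ∧
  (∀ j, 1 ≤ j → j ≤ r → S (i j) = S (i (j + r))) ∧
  (∀ j, 1 ≤ j → j < m → i (j + 1) < i j) ∧
  (∀ j, m ≤ j → j < 2 * r → i j < i (j + 1)) ∧
  (∀ j, 1 ≤ j → j < 2 * r → i (j + 1) ≤ i j + k ∧ i j ≤ i (j + 1) + k) ∧
  (m < 2 * r → i (m + 1) < i m + k)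

/-- A finite sequence `S` (1-indexed, of length `n`) is `k`-special if it admits no
`k`-bad index sequence with all indices in `{1, …, n}`. -/
def KSpecialFin {α : Type*} (k : ℕ) (S : ℕ → α) (n : ℕ) : Prop :=
  ¬ ∃ r m i, KBadIdx k S r m i ∧ ∀ j, 1 ≤ j → j ≤ 2 * r → 1 ≤ i j ∧ i j ≤ n

/-- An infinite sequence `S` (1-indexed) is `k`-special if it admits no `k`-bad index
sequence. -/
def KSpecialInf {α : Type*} (k : ℕ) (S : ℕ → α) : Prop :=
  ¬ ∃ r m i, KBadIdx k S r m i ∧ ∀ j, 1 ≤ j → j ≤ 2 * r → 1 ≤ i j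

/-- The sequence `S_{n,c} = 1, 2, …, n, 1, 2, …, c` (1-indexed; entry at position `i` is `i`
for `i ≤ n` and `i - n` for `i > n`). -/
def Snc (n : ℕ) (c : ℕ) : ℕ → ℕ := fun i => if i ≤ n then i else i - n

/-- The infinite `k`-ary tree: vertices are finite words over `Fin k` (the root is `[]`,
and the children of `v`, in left-to-right order, are `j :: v` for `j : Fin k`). -/
def kTree (k : ℕ) : SimpleGraph (List (Fin k)) :=
  SimpleGraph.fromRel (fun u v => ∃ j : Fin k, u = j :: v)

/-- The (1-based) position in the defining sequence of the color of the edge joining a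
non-root vertex to its parent: the edges from the root get positions `1, …, k` left to
right, and if the edge from `v` to its parent has position `i`, then the edges to the
children of `v` get positions `i + 1, …, i + k` left to right. -/
def edgeIdx {k : ℕ} : List (Fin k) → ℕ
  | [] => 0
  | j :: v => edgeIdx v + (j : ℕ) + 1

/-- The edge-coloring of the infinite `k`-ary tree derived from the 1-indexed sequence `S`. -/
def derivedColoring (k : ℕ) (S : ℕ → ℕ) : Sym2 (List (Fin k)) → ℕ :=
  Sym2.lift ⟨fun u v =>
    if v.length < u.length then S (edgeIdx u)
    else if u.length < v.length then S (edgeIdx v) else 0, by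
      intro u v
      rcases lt_trichotomy u.length v.length with h | h | h <;>
        simp [h, lt_irrefl] <;> omega⟩

/-- An infinite 1-indexed sequence is square-free (nonrepetitive) if no contiguous block
is a repetition. -/
def SeqSquareFree {α : Type*} (S : ℕ → α) : Prop :=
  ¬ ∃ p r : ℕ, 1 ≤ p ∧ 1 ≤ r ∧ ∀ j < r, S (p + j) = S (p + r + j)

/-- An infinite 1-indexed sequence is palindrome-free if no contiguous block of length at
least 2 reads the same forwards and backwards. -/
def SeqPalindromeFree {α : Type*} (S : ℕ → α) : Prop :=
  ¬ ∃ p L : ℕ, 1 ≤ p ∧ 2 ≤ L ∧ ∀ j < L, S (p + j) = S (p + L - 1 - j)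

/-- The sequence `S^{(w)}` obtained from the 1-indexed sequence `S` by replacing each
symbol `t` by the block `t⁽⁰⁾, t⁽¹⁾, …, t⁽ʷ⁻¹⁾` of `w` new symbols (encoded as pairs). -/
def blowup {α : Type*} (w : ℕ) (S : ℕ → α) : ℕ → α × ℕ :=
  fun p => (S ((p - 1) / w + 1), (p - 1) % w)

section Aux

/-- adjacent equal letters contradict square-freeness -/
lemma con_adj {S : ℕ → ℕ} (hSF : SeqSquareFree S) {a : ℕ} (ha : 1 ≤ a)
    (h : S a = S (a + 1)) : False := by
  refine hSF ⟨a, 1, ha, le_refl 1, ?_⟩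
  intro j hj
  interval_cases j
  simpa using h

/-- letters at distance two equal contradict palindrome-freeness -/
lemma con_pal {S : ℕ → ℕ} (hPF : SeqPalindromeFree S) {a : ℕ} (ha : 1 ≤ a)
    (h : S a = S (a + 2)) : False := by
  refine hPF ⟨a, 3, ha, by norm_num, ?_⟩
  intro j hj
  interval_cases j
  · simpa using h
  · norm_num
  · simpa using h.symm

/-- combined: equal letters at distance 1 or 2 -/
lemma con12 {S : ℕ → ℕ} (hSF : SeqSquareFree S) (hPF : SeqPalindromeFree S)
    {a b : ℕ} (ha : 1 ≤ a) (hab : b = a + 1 ∨ b = a + 2) (h : S a = S b) : False := by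
  rcases hab with rfl | rfl
  · exact con_adj hSF ha h
  · exact con_pal hPF ha h

/-- discrete intermediate value for staircases with unit up-steps -/
lemma ivt_stair (f : ℕ → ℤ) (a : ℕ) :
    ∀ b : ℕ, a ≤ b → (∀ j, a ≤ j → j < b → f (j + 1) ≤ f j + 1 ∧ f j ≤ f (j + 1)) →
    ∀ v : ℤ, f a ≤ v → v ≤ f b → ∃ j, a ≤ j ∧ j ≤ b ∧ f j = v := by
  intro b
  induction b with
  | zero => intro hab _ v h1 h2; exact ⟨0, hab, le_refl 0, le_antisymm (by simpa [Nat.le_zero.mp hab] using h1) h2⟩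
  | succ b ih =>
    intro hab hstep v h1 h2
    rcases Nat.lt_or_ge a (b+1) with hab' | hab'
    · have hab'' : a ≤ b := Nat.lt_succ_iff.mp hab'
      rcases le_or_gt v (f b) with hvb | hvb
      · obtain ⟨j, hj1, hj2, hj3⟩ := ih hab'' (fun j h1 h2 => hstep j h1 (Nat.lt_succ_of_lt h2)) v h1 hvb
        exact ⟨j, hj1, Nat.le_succ_of_le hj2, hj3⟩
      · have := hstep b hab'' (Nat.lt_succ_self b)
        exact ⟨b+1, Nat.le_succ_of_le hab'', le_refl _, by omega⟩
    · have : a = b + 1 := le_antisymm hab hab'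
      exact ⟨a, le_refl a, hab, le_antisymm h1 (by rw [this]; exact h2)⟩

/-- a positive multiple of k in [2, 2k-1] equals k -/
lemma dvd_eq_k {k : ℕ} (D : ℤ) (hdvd : (k:ℤ) ∣ D) (h1 : 2 ≤ D) (h2 : D ≤ 2*k - 1) :
    D = k := by
  obtain ⟨c, rfl⟩ := hdvd
  have hk : (1:ℤ) ≤ k := by nlinarith
  have : c = 1 := by nlinarith
  simp [this]

lemma dvd_eq_k2 {k : ℕ} (D : ℤ) (hdvd : (k:ℤ) ∣ D) (h1 : 2 ≤ D) (h2 : D ≤ 2*k) :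
    D = k ∨ D = 2*k := by
  obtain ⟨c, rfl⟩ := hdvd
  have hk : (1:ℤ) ≤ k := by nlinarith
  have hc1 : 1 ≤ c := by nlinarith
  have hc2 : c ≤ 2 := by nlinarith
  interval_cases c
  · left; ring
  · right; ring

lemma dvd_eq_zero {k : ℕ} (D : ℤ) (hdvd : (k:ℤ) ∣ D) (h1 : -(k:ℤ) + 1 ≤ D) (h2 : D ≤ (k:ℤ) - 1) :
    D = 0 := by
  obtain ⟨c, rfl⟩ := hdvd
  have hk : (1:ℤ) ≤ k := by nlinarith
  have : c = 0 := by nlinarith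
  simp [this]

end Aux

section Blk

lemma blk_add {k : ℕ} (hk : 1 ≤ k) (n d : ℤ) :
    ((n + d * k) - 1) / (k:ℤ) + 1 = ((n - 1) / (k:ℤ) + 1) + d := by
  have hne : (k:ℤ) ≠ 0 := by positivity
  have h : n + d * k - 1 = (n - 1) + d * k := by ring
  rw [h, Int.add_mul_ediv_right _ _ hne]; ring

lemma blk_mono {k : ℕ} (hk : 1 ≤ k) {n n' : ℤ} (h : n ≤ n') :
    (n - 1) / (k:ℤ) + 1 ≤ (n' - 1) / (k:ℤ) + 1 := by
  have hkZ : (0:ℤ) < (k:ℤ) := by exact_mod_cast hk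
  have := Int.ediv_le_ediv hkZ (show n - 1 ≤ n' - 1 by omega)
  omega

lemma blk_step {k : ℕ} (hk : 1 ≤ k) {n n' : ℤ} (h : n' ≤ n + k) :
    (n' - 1) / (k:ℤ) + 1 ≤ ((n - 1) / (k:ℤ) + 1) + 1 := by
  have hkZ : (0:ℤ) < (k:ℤ) := by exact_mod_cast hk
  have hne : (k:ℤ) ≠ 0 := hkZ.ne'
  have h2 : (n' - 1) / (k:ℤ) ≤ (n - 1 + 1 * k) / (k:ℤ) :=
    Int.ediv_le_ediv hkZ (by omega)
  rw [Int.add_mul_ediv_right _ _ hne] at h2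
  omega

lemma cast_blk {k a : ℕ} (hk : 1 ≤ k) (ha : 1 ≤ a) :
    (((a - 1) / k + 1 : ℕ) : ℤ) = ((a:ℤ) - 1) / (k:ℤ) + 1 := by
  rw [Nat.cast_add, Nat.cast_one, Int.natCast_div, Nat.cast_sub ha, Nat.cast_one]

end Blk

theorem part1 {k : ℕ} (hk : 1 ≤ k) {S : ℕ → ℕ} (hSF : SeqSquareFree S)
    (hPF : SeqPalindromeFree S) : KSpecialInf k (blowup k S) := by
  rintro ⟨r, m, i, ⟨hr, hm1, hm2, hrep, hdec, hinc, hgap, hturn⟩, hposall⟩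
  have hkZ : (0:ℤ) < (k:ℤ) := by exact_mod_cast hk
  set I : ℕ → ℤ := fun j => (i j : ℤ) with hIdef
  set nb : ℕ → ℕ := fun j => (i j - 1) / k + 1 with hnbdef
  set B : ℕ → ℤ := fun j => ((i j : ℤ) - 1) / (k:ℤ) + 1 with hBdef
  have hnbpos : ∀ j, 1 ≤ nb j := fun j => Nat.le_add_left 1 _
  have hBnb : ∀ j, 1 ≤ j → j ≤ 2*r → (nb j : ℤ) = B j := by
    intro j h1 h2
    exact cast_blk hk (hposall j h1 h2)
  have hBrel : ∀ j j' (d : ℤ), I j' = I j + d * k → B j' = B j + d := by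
    intro j j' d h
    show ((i j' : ℤ) - 1) / (k:ℤ) + 1 = _
    rw [show (i j' : ℤ) = I j' from rfl, h, blk_add hk]
  have hgapZ : ∀ j, 1 ≤ j → j < 2*r → I (j+1) ≤ I j + k ∧ I j ≤ I (j+1) + k := by
    intro j h1 h2
    have h3 := (hgap j h1 h2).1
    have h4 := (hgap j h1 h2).2
    constructor
    · show ((i (j+1) : ℕ) : ℤ) ≤ ((i j : ℕ) : ℤ) + (k:ℤ)
      exact_mod_cast h3
    · show ((i j : ℕ) : ℤ) ≤ ((i (j+1) : ℕ) : ℤ) + (k:ℤ)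
      exact_mod_cast h4
  have hdecZ : ∀ j, 1 ≤ j → j < m → I (j+1) < I j := by
    intro j h1 h2
    show ((i (j+1) : ℕ) : ℤ) < ((i j : ℕ) : ℤ)
    exact_mod_cast hdec j h1 h2
  have hincZ : ∀ j, m ≤ j → j < 2*r → I j < I (j+1) := by
    intro j h1 h2
    show ((i j : ℕ) : ℤ) < ((i (j+1) : ℕ) : ℤ)
    exact_mod_cast hinc j h1 h2
  have hpair : ∀ j, 1 ≤ j → j ≤ r → S (nb j) = S (nb (j+r)) ∧ (k:ℤ) ∣ (I (j+r) - I j) := by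
    intro j h1 h2
    have h3 := hrep j h1 h2
    rw [show blowup k S (i j) = (S ((i j - 1)/k + 1), (i j - 1) % k) from rfl,
        show blowup k S (i (j+r)) = (S ((i (j+r) - 1)/k + 1), (i (j+r) - 1) % k) from rfl,
        Prod.mk.injEq] at h3
    refine ⟨h3.1, ?_⟩
    have hmod : (i j - 1) % k = (i (j+r) - 1) % k := h3.2
    have hd := (Nat.modEq_iff_dvd (n := k) (a := i j - 1) (b := i (j+r) - 1)).mp hmod
    have hij : 1 ≤ i j := hposall j h1 (by omega)
    have hijr : 1 ≤ i (j+r) := hposall (j+r) (by omega) (by omega)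
    have hcst : ((i (j+r) - 1 : ℕ) : ℤ) - ((i j - 1 : ℕ) : ℤ) = I (j+r) - I j := by
      simp only [hIdef]; omega
    rwa [hcst] at hd
  have hDEC : ∀ a, 1 ≤ a → ∀ b, a ≤ b → b ≤ m → I b + ((b:ℤ) - (a:ℤ)) ≤ I a := by
    intro a ha b hab
    induction b, hab using Nat.le_induction with
    | base => intro _; simp
    | succ b hb ih =>
      intro hbm
      have h1 := hdecZ b (by omega) (by omega)
      have h2 := ih (by omega)
      push_cast
      push_cast at h2
      omega
  have hINC : ∀ a, m ≤ a → ∀ b, a ≤ b → b ≤ 2*r → I a + ((b:ℤ) - (a:ℤ)) ≤ I b := by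
    intro a ha b hab
    induction b, hab using Nat.le_induction with
    | base => intro _; simp
    | succ b hb ih =>
      intro hbm
      have h1 := hincZ b (by omega) (by omega)
      have h2 := ih (by omega)
      push_cast
      push_cast at h2
      omega
  have con2 : ∀ x y, 1 ≤ x → x ≤ 2*r → 1 ≤ y → y ≤ 2*r →
      (B y = B x + 1 ∨ B y = B x + 2) → S (nb x) = S (nb y) → False := by
    intro x y hx1 hx2 hy1 hy2 hbb heq
    have e1 := hBnb x hx1 hx2
    have e2 := hBnb y hy1 hy2
    refine con12 hSF hPF (hnbpos x) (a := nb x) (b := nb y) ?_ heq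
    rcases hbb with h | h
    · left; omega
    · right; omega
  have EPS1 : ∀ j, 1 ≤ j → j + 1 ≤ r → j + 1 ≤ m →
      (I (j+r+1) - I (j+r)) - (I (j+1) - I j) = k → False := by
    intro j h1 h2 h3 heq
    obtain ⟨hS1, hd1⟩ := hpair j h1 (by omega)
    obtain ⟨hS2, hd2⟩ := hpair (j+1) (by omega) h2
    obtain ⟨d, hd⟩ := hd1
    have hA : I (j+r) = I j + d * k := by linear_combination hd
    have hB2 : I (j+1+r) = I (j+1) + (d+1) * k := by
      rw [show j+1+r = j+r+1 from by omega]
      linear_combination hd + heq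
    have b1 : B (j+r) = B j + d := hBrel _ _ _ hA
    have b2 : B (j+1+r) = B (j+1) + (d+1) := hBrel _ _ _ hB2
    have s1 : I (j+1) < I j := hdecZ j h1 (by omega)
    have s2 : I j ≤ I (j+1) + k := (hgapZ j h1 (by omega)).2
    have hmono : B (j+1) ≤ B j := blk_mono hk (le_of_lt s1)
    have hstep : B j ≤ B (j+1) + 1 := blk_step hk s2
    have e0 := hBnb j (by omega) (by omega)
    have e1 := hBnb (j+1) (by omega) (by omega)
    have e2 := hBnb (j+r) (by omega) (by omega)
    have e3 := hBnb (j+1+r) (by omega) (by omega)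
    rcases (show B (j+1) = B j ∨ B j = B (j+1) + 1 from by omega) with hc | hc
    · have hx : nb (j+1) = nb j := by omega
      have heq2 : S (nb (j+r)) = S (nb (j+1+r)) := by
        rw [← hS1, ← hS2, hx]
      exact con2 (j+r) (j+1+r) (by omega) (by omega) (by omega) (by omega)
        (by left; omega) heq2
    · have hx : nb (j+1+r) = nb (j+r) := by omega
      have heq2 : S (nb (j+1)) = S (nb j) := by
        rw [hS1, hS2, hx]
      exact con2 (j+1) j (by omega) (by omega) (by omega) (by omega)
        (by left; omega) heq2
  rcases le_or_gt m r with hC2 | hC1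
  · -- Case II : m ≤ r
    by_cases hA : ∃ j, 1 ≤ j ∧ j + 1 ≤ m ∧ (I (j+r+1) - I (j+r)) - (I (j+1) - I j) = (k:ℤ)
    · obtain ⟨j, hj1, hj2, hj3⟩ := hA
      exact EPS1 j hj1 (by omega) hj2 hj3
    · push_neg at hA
      have hspec : ∀ j, 1 ≤ j → j + 1 ≤ m → I j = I (j+1) + k ∧ I (j+r+1) = I (j+r) + k := by
        intro j h1 h2
        have hdn : I (j+1) < I j := hdecZ j h1 (by omega)
        have hdn2 : I j ≤ I (j+1) + k := (hgapZ j h1 (by omega)).2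
        have hup : I (j+r) < I (j+r+1) := hincZ (j+r) (by omega) (by omega)
        have hup2 : I (j+r+1) ≤ I (j+r) + k := (hgapZ (j+r) (by omega) (by omega)).1
        have hdvd : (k:ℤ) ∣ ((I (j+r+1) - I (j+r)) - (I (j+1) - I j)) := by
          obtain ⟨_, d1⟩ := hpair j h1 (by omega)
          obtain ⟨_, d2⟩ := hpair (j+1) (by omega) (by omega)
          rw [show j+1+r = j+r+1 from by omega] at d2
          have h := Int.dvd_sub d2 d1
          convert h using 1; ring
        rcases dvd_eq_k2 _ hdvd (by omega) (by omega) with h | h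
        · exact absurd h (hA j h1 h2)
        · constructor <;> omega
      have hch : ∀ x : ℕ, x ≤ m - 1 →
          I (m - x) = I m + (x:ℤ) * k ∧ I (m - x + r) = I (m + r) - (x:ℤ) * k := by
        intro x
        induction x with
        | zero => intro _; norm_num
        | succ x ih =>
          intro hx
          obtain ⟨c1, c2⟩ := ih (by omega)
          obtain ⟨s1, s2⟩ := hspec (m - (x+1)) (by omega) (by omega)
          rw [show m - (x+1) + 1 = m - x from by omega] at s1
          rw [show m - (x+1) + r + 1 = m - x + r from by omega] at s2
          constructor
          · push_cast
            linear_combination s1 + c1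
          · push_cast
            linear_combination c2 - s2
      obtain ⟨hSm, hdm⟩ := hpair m (by omega) hC2
      obtain ⟨c', hc'⟩ := hdm
      have hc'pos : 1 ≤ c' := by
        have h := hINC m (le_refl m) (m+r) (by omega) (by omega)
        push_cast at h
        nlinarith
      have hmZ : (2:ℤ) ≤ (m:ℤ) := by exact_mod_cast hm1
      by_cases hD : 3 ≤ c' - 2*((m:ℤ)-1)
      · obtain ⟨ch1, ch2⟩ := hch (m-1) (le_refl _)
        rw [show m - (m-1) = 1 from by omega] at ch1 ch2
        have hIr1 : I (r+1) = I m + (c' - ((m:ℤ)-1)) * k := by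
          rw [show r+1 = 1+r from by omega]
          have hcm : ((m-1 : ℕ) : ℤ) = (m:ℤ) - 1 := by omega
          rw [hcm] at ch2
          linear_combination ch2 + hc'
        have hBr1 : B (r+1) = B m + (c' - ((m:ℤ)-1)) := hBrel _ _ _ hIr1
        have hBmr : B m ≤ B r := blk_mono hk (show I m ≤ I r from by
          have := hINC m (le_refl m) r hC2 (by omega)
          omega)
        have hstep_r : I (r+1) ≤ I r + k := (hgapZ r (by omega) (by omega)).1
        have hmono_r : I r < I (r+1) := hincZ r hC2 (by omega)
        have hBs1 : B r ≤ B (r+1) := blk_mono hk (le_of_lt hmono_r)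
        have hBs2 : B (r+1) ≤ B r + 1 := blk_step hk hstep_r
        have he1 : B m + 1 ≤ B r := by omega
        obtain ⟨j', hj'1, hj'2, hj'3⟩ := ivt_stair B m r hC2
          (fun j hj1 hj2 => ⟨blk_step hk (hgapZ j (by omega) (by omega)).1,
            blk_mono hk (le_of_lt (hincZ j hj1 (by omega)))⟩)
          (B m + 1) (by omega) he1
        have hconst : ∀ j, m ≤ j → j ≤ r → I (j + r) = I j + c' * k := by
          intro j hj1
          induction j, hj1 using Nat.le_induction with
          | base => intro _; linear_combination hc'
          | succ j hj ih =>
            intro hj2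
            have ihh := ih (by omega)
            obtain ⟨_, d1⟩ := hpair j (by omega) (by omega)
            obtain ⟨_, d2⟩ := hpair (j+1) (by omega) (by omega)
            rw [show j+1+r = j+r+1 from by omega] at d2
            have hup1 : I j < I (j+1) := hincZ j hj (by omega)
            have hup1' : I (j+1) ≤ I j + k := (hgapZ j (by omega) (by omega)).1
            have hup2 : I (j+r) < I (j+r+1) := hincZ (j+r) (by omega) (by omega)
            have hup2' : I (j+r+1) ≤ I (j+r) + k := (hgapZ (j+r) (by omega) (by omega)).1
            have hdvd : (k:ℤ) ∣ ((I (j+r+1) - I (j+r)) - (I (j+1) - I j)) := by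
              have h := Int.dvd_sub d2 d1
              convert h using 1; ring
            have hz := dvd_eq_zero _ hdvd (by omega) (by omega)
            rw [show j+1+r = j+r+1 from by omega]
            linear_combination ihh + hz
        have hQ : I (j' + r) = I j' + c' * k := hconst j' hj'1 hj'2
        obtain ⟨hSj', _⟩ := hpair j' (by omega) hj'2
        have hBj'r : B (j'+r) = B j' + c' := hBrel _ _ _ hQ
        obtain ⟨hSm1, _⟩ := hpair (m-1) (by omega) (by omega)
        obtain ⟨cm1a, cm1b⟩ := hch 1 (by omega)
        have hBm1 : B (m-1) = B m + 1 := by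
          apply hBrel
          push_cast at cm1a
          linear_combination cm1a
        have hBm1r : B (m-1+r) = B (m-1) + (c' - 2) := by
          apply hBrel
          push_cast at cm1a cm1b
          linear_combination cm1b - cm1a + hc'
        have hx : nb (m-1) = nb j' := by
          have u1 := hBnb (m-1) (by omega) (by omega)
          have u2 := hBnb j' (by omega) (by omega)
          omega
        have hfin : S (nb (m-1+r)) = S (nb (j'+r)) := by
          rw [← hSm1, ← hSj', hx]
        exact con2 (m-1+r) (j'+r) (by omega) (by omega) (by omega) (by omega)
          (by right; omega) hfin
      · push_neg at hD
        have hx : ∃ x : ℕ, x ≤ m - 1 ∧ (c' - 2*(x:ℤ) = 1 ∨ c' - 2*(x:ℤ) = 2) := by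
          rcases Int.even_or_odd c' with ⟨c2, hc2⟩ | ⟨c2, hc2⟩
          · exact ⟨(c2-1).toNat, by omega, Or.inr (by omega)⟩
          · exact ⟨c2.toNat, by omega, Or.inl (by omega)⟩
        obtain ⟨x, hx1, hx2⟩ := hx
        obtain ⟨ch1, ch2⟩ := hch x hx1
        obtain ⟨hSj, _⟩ := hpair (m-x) (by omega) (by omega)
        have hBx : B (m-x+r) = B (m-x) + (c' - 2*(x:ℤ)) := by
          apply hBrel
          linear_combination ch2 - ch1 + hc'
        exact con2 (m-x) (m-x+r) (by omega) (by omega) (by omega) (by omega)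
          (by rcases hx2 with h | h
              · left; omega
              · right; omega) hSj
  · -- Case I : r < m
    rcases eq_or_lt_of_le hm2 with hmo | hlt
    · -- m = 2r : monotone
      have hsconst : ∀ j, 1 ≤ j → j + 1 ≤ r → I (j+1) - I j = I (j+r+1) - I (j+r) := by
        intro j h1 h2
        obtain ⟨_, d1⟩ := hpair j h1 (by omega)
        obtain ⟨_, d2⟩ := hpair (j+1) (by omega) h2
        rw [show j+1+r = j+r+1 from by omega] at d2
        have hdvd : (k:ℤ) ∣ ((I (j+r+1) - I (j+r)) - (I (j+1) - I j)) := by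
          have h := Int.dvd_sub d2 d1
          convert h using 1; ring
        have s1 : I (j+1) < I j := hdecZ j h1 (by omega)
        have s2 : I j ≤ I (j+1) + k := (hgapZ j h1 (by omega)).2
        have s3 : I (j+r+1) < I (j+r) := hdecZ (j+r) (by omega) (by omega)
        have s4 : I (j+r) ≤ I (j+r+1) + k := (hgapZ (j+r) (by omega) (by omega)).2
        have hz := dvd_eq_zero _ hdvd (by omega) (by omega)
        omega
      obtain ⟨hS1, hd1⟩ := hpair 1 (le_refl 1) hr
      obtain ⟨c0, hc0⟩ := hd1
      have hcval : I (1+r) = I 1 - (-c0) * k := by linear_combination hc0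
      have hcpos : 1 ≤ -c0 := by
        have h := hDEC 1 (le_refl 1) (1+r) (by omega) (by omega)
        push_cast at h
        nlinarith
      set c : ℤ := -c0 with hcdef
      have hdconst : ∀ j, 1 ≤ j → j ≤ r → I (j+r) = I j - c * k := by
        intro j h1
        induction j, h1 using Nat.le_induction with
        | base => intro _; exact hcval
        | succ j hj ih =>
          intro h2
          have ihh := ih (by omega)
          have hs := hsconst j hj h2
          rw [show j+1+r = j+r+1 from by omega]
          linear_combination ihh - hs
      have hBd : ∀ j, 1 ≤ j → j ≤ r → B (j+r) = B j - c := by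
        intro j h1 h2
        have h := hBrel j (j+r) (-c) (by rw [hdconst j h1 h2]; ring)
        omega
      have hBr1 : B (r+1) = B 1 - c := by
        have h := hBd 1 (le_refl 1) hr
        rw [show 1+r = r+1 from by omega] at h
        exact h
      have hBs1 : B (r+1) ≤ B r := blk_mono hk (le_of_lt (hdecZ r hr (by omega)))
      have hBs2 : B r ≤ B (r+1) + 1 := blk_step hk (hgapZ r hr (by omega)).2
      have hB2r : B (2*r) = B r - c := by
        have h := hBd r hr (le_refl r)
        rw [show r+r = 2*r from by omega] at h
        exact h
      refine hSF ⟨nb (2*r), c.toNat, hnbpos _, by omega, ?_⟩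
      intro t ht
      have hstepdn : ∀ j, 1 ≤ j → j < r → - B (j+1) ≤ - B j + 1 ∧ - B j ≤ - B (j+1) := by
        intro j hj1 hj2
        have u1 : B (j+1) ≤ B j := blk_mono hk (le_of_lt (hdecZ j hj1 (by omega)))
        have u2 : B j ≤ B (j+1) + 1 := blk_step hk (hgapZ j hj1 (by omega)).2
        omega
      have hb1 : - B 1 ≤ -(B r + (t:ℤ)) := by omega
      have hb2 : -(B r + (t:ℤ)) ≤ - B r := by omega
      obtain ⟨j, hj1, hj2, hj3⟩ := ivt_stair (fun j => - B j) 1 r hr hstepdn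
        (-(B r + (t:ℤ))) hb1 hb2
      have hj3'' : - B j = -(B r + (t:ℤ)) := hj3
      obtain ⟨hSj, _⟩ := hpair j hj1 hj2
      have hBjr : B (j+r) = B j - c := hBd j hj1 hj2
      have u1 := hBnb j (by omega) (by omega)
      have u2 := hBnb (j+r) (by omega) (by omega)
      have u3 := hBnb (2*r) (by omega) (by omega)
      have hj3' : B j = B r + (t:ℤ) := by omega
      have e1 : nb (2*r) + t = nb (j+r) := by omega
      have e2 : nb (2*r) + c.toNat + t = nb j := by omega
      rw [e1, e2]
      exact hSj.symm
    · -- r < m < 2r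
      have ht1 : 1 ≤ m - r := by omega
      have ht2 : m - r + 1 ≤ r := by omega
      have htr : m - r + r = m := by omega
      obtain ⟨_, d1⟩ := hpair (m-r) ht1 (by omega)
      obtain ⟨_, d2⟩ := hpair (m-r+1) (by omega) ht2
      have hdvd : (k:ℤ) ∣ ((I (m-r+r+1) - I (m-r+r)) - (I (m-r+1) - I (m-r))) := by
        rw [show m-r+1+r = m-r+r+1 from by omega] at d2
        have h := Int.dvd_sub d2 d1
        convert h using 1; ring
      rw [htr] at hdvd
      have s1 : I (m-r+1) < I (m-r) := hdecZ (m-r) ht1 (by omega)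
      have s2 : I (m-r) ≤ I (m-r+1) + k := (hgapZ (m-r) ht1 (by omega)).2
      have s3 : I m < I (m+1) := hincZ m (le_refl m) hlt
      have s4 : I (m+1) < I m + k := by
        show ((i (m+1) : ℕ) : ℤ) < ((i m : ℕ) : ℤ) + (k:ℤ)
        exact_mod_cast hturn hlt
      have heq := dvd_eq_k _ hdvd (by omega) (by omega)
      refine EPS1 (m-r) ht1 ht2 (by omega) ?_
      rw [htr]
      exact heq

section BadSeq
variable {α : Type*}

lemma mk_mono (k r : ℕ) (hr : 1 ≤ r) (T : ℕ → α) (i : ℕ → ℕ)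
    (H1 : ∀ j, 1 ≤ j → j ≤ r → T (i j) = T (i (j+r)))
    (H3 : ∀ j, 1 ≤ j → j ≤ 2*r → 1 ≤ i j)
    (Hdec : ∀ t, 1 ≤ t → t < 2*r → i (t+1) < i t ∧ i t ≤ i (t+1) + k)
    (hKS : KSpecialInf k T) : False := by
  refine hKS ⟨r, 2*r, i, ⟨hr, by omega, le_refl _, H1, ?_, ?_, ?_, ?_⟩, H3⟩
  · intro j h1 h2; exact (Hdec j h1 h2).1
  · intro j h1 h2; omega
  · intro j h1 h2; exact ⟨by have := (Hdec j h1 h2).1; omega, (Hdec j h1 h2).2⟩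
  · intro h; omega

lemma mk_updown (k r M : ℕ) (hr : 1 ≤ r) (hM2 : 2 ≤ M) (hMn : M < 2*r)
    (T : ℕ → α) (i : ℕ → ℕ)
    (H1 : ∀ j, 1 ≤ j → j ≤ r → T (i j) = T (i (j+r)))
    (H3 : ∀ j, 1 ≤ j → j ≤ 2*r → 1 ≤ i j)
    (Hdec : ∀ t, 1 ≤ t → t < M → i (t+1) < i t ∧ i t ≤ i (t+1) + k)
    (Hinc : ∀ t, M ≤ t → t < 2*r → i t < i (t+1) ∧ i (t+1) ≤ i t + k)
    (Hturn : i (M+1) < i M + k)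
    (hKS : KSpecialInf k T) : False := by
  refine hKS ⟨r, M, i, ⟨hr, by omega, by omega, H1, ?_, ?_, ?_, ?_⟩, H3⟩
  · intro j h1 h2; exact (Hdec j h1 h2).1
  · intro j h1 h2; exact (Hinc j h1 h2).1
  · intro j h1 h2
    rcases Nat.lt_or_ge j M with h | h
    · exact ⟨by have := (Hdec j h1 h).1; omega, (Hdec j h1 h).2⟩
    · exact ⟨(Hinc j h h2).2, by have := (Hinc j h h2).1; omega⟩
  · intro _; exact Hturn

/-- turn an up-down walk index sequence into a contradiction with `KSpecialInf` -/
lemma badseq (k r n : ℕ) (hk : 1 ≤ k) (hr : 1 ≤ r) (hn : n = 2*r)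
    (T : ℕ → α) (hKS : KSpecialInf k T) (i : ℕ → ℕ)
    (H1 : ∀ j, 1 ≤ j → j ≤ r → T (i j) = T (i (j+r)))
    (H3 : ∀ j, 1 ≤ j → j ≤ n → 1 ≤ i j)
    (M : ℕ) (hM : M ≤ n)
    (Hdec : ∀ t, 1 ≤ t → t < M → i (t+1) < i t ∧ i t ≤ i (t+1) + k)
    (Hinc : ∀ t, M < t → t < n → i t < i (t+1) ∧ i (t+1) ≤ i t + k)
    (Hturn : 1 ≤ M → M < n → (i (M+1) ≠ i M ∧ i (M+1) < i M + k ∧ i M < i (M+1) + k)) :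
    False := by
  subst hn
  set i' : ℕ → ℕ := fun t => i (2*r+1-t) with hi'
  have H1' : ∀ j, 1 ≤ j → j ≤ r → T (i' j) = T (i' (j+r)) := by
    intro j h1 h2
    have h := H1 (r+1-j) (by omega) (by omega)
    rw [show r+1-j+r = 2*r+1-j from by omega] at h
    show T (i (2*r+1-j)) = T (i (2*r+1-(j+r)))
    rw [show 2*r+1-(j+r) = r+1-j from by omega]
    exact h.symm
  have H3' : ∀ j, 1 ≤ j → j ≤ 2*r → 1 ≤ i' j := by
    intro j h1 h2
    exact H3 (2*r+1-j) (by omega) (by omega)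
  rcases Nat.eq_or_lt_of_le hM with hMeq | hMlt
  · -- M = n : all decreasing
    exact mk_mono k r hr T i H1 H3 (fun t h1 h2 => Hdec t h1 (by omega)) hKS
  · rcases Nat.eq_zero_or_pos M with hM0 | hM1
    · -- M = 0 : all increasing, flip
      refine mk_mono k r hr T i' H1' H3' ?_ hKS
      intro t h1 h2
      have h := Hinc (2*r-t) (by omega) (by omega)
      rw [show 2*r-t+1 = 2*r+1-t from by omega] at h
      show i (2*r+1-(t+1)) < i (2*r+1-t) ∧ i (2*r+1-t) ≤ i (2*r+1-(t+1)) + k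
      rw [show 2*r+1-(t+1) = 2*r-t from by omega]
      exact ⟨h.1, by omega⟩
    · obtain ⟨hne, hg1, hg2⟩ := Hturn hM1 hMlt
      rcases Nat.lt_or_ge (i M) (i (M+1)) with hs | hs
      · -- up sign at the turn
        rcases Nat.lt_or_ge M 2 with hM1' | hM2
        · -- M = 1 : flip to all decreasing
          have hMe : M = 1 := by omega
          subst hMe
          refine mk_mono k r hr T i' H1' H3' ?_ hKS
          intro t h1 h2
          show i (2*r+1-(t+1)) < i (2*r+1-t) ∧ i (2*r+1-t) ≤ i (2*r+1-(t+1)) + k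
          rw [show 2*r+1-(t+1) = 2*r-t from by omega]
          rcases Nat.lt_or_ge t (2*r-1) with ht | ht
          · have h := Hinc (2*r-t) (by omega) (by omega)
            rw [show 2*r-t+1 = 2*r+1-t from by omega] at h
            exact ⟨h.1, by omega⟩
          · have he : t = 2*r-1 := by omega
            rw [show 2*r-t = 1 from by omega, show 2*r+1-t = 2 from by omega]
            have h12 : i (1+1) = i 2 := by norm_num
            omega
        · -- M ≥ 2 : direct up-down
          exact mk_updown k r M hr hM2 (by omega) T i H1 H3 Hdec
            (fun t h1 h2 => by
              rcases Nat.eq_or_lt_of_le h1 with he | hlt2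
              · rw [← he]; omega
              · exact Hinc t hlt2 h2) hg1 hKS
      · -- down sign at the turn
        rcases Nat.lt_or_ge (M+1) (2*r) with hMlt2 | hMge
        · -- M + 1 < n : flip, turn at n - M
          refine mk_updown k r (2*r-M) hr (by omega) (by omega) T i' H1' H3' ?_ ?_ ?_ hKS
          · intro t h1 h2
            show i (2*r+1-(t+1)) < i (2*r+1-t) ∧ i (2*r+1-t) ≤ i (2*r+1-(t+1)) + k
            rw [show 2*r+1-(t+1) = 2*r-t from by omega]
            have h := Hinc (2*r-t) (by omega) (by omega)
            rw [show 2*r-t+1 = 2*r+1-t from by omega] at h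
            exact ⟨h.1, by omega⟩
          · intro t h1 h2
            show i (2*r+1-t) < i (2*r+1-(t+1)) ∧ i (2*r+1-(t+1)) ≤ i (2*r+1-t) + k
            rw [show 2*r+1-(t+1) = 2*r-t from by omega]
            rcases Nat.lt_or_ge (2*r-t) M with hc | hc
            · have h := Hdec (2*r-t) (by omega) hc
              rw [show 2*r-t+1 = 2*r+1-t from by omega] at h
              exact ⟨h.1, by omega⟩
            · have he : 2*r-t = M := by omega
              rw [he, show 2*r+1-t = M+1 from by omega]
              omega
          · show i (2*r+1-(2*r-M+1)) < i (2*r+1-(2*r-M)) + k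
            rw [show 2*r+1-(2*r-M+1) = M from by omega,
                show 2*r+1-(2*r-M) = M+1 from by omega]
            omega
        · -- M = n - 1 : all decreasing already
          refine mk_mono k r hr T i H1 H3 ?_ hKS
          intro t h1 h2
          rcases Nat.lt_or_ge t M with hc | hc
          · exact Hdec t h1 hc
          · have he : t = M := by omega
            subst he
            omega

end BadSeq

section Tree
variable {k : ℕ}

lemma ktree_adj {u v : List (Fin k)} (h : (kTree k).Adj u v) :
    (∃ j : Fin k, u = j :: v) ∨ (∃ j : Fin k, v = j :: u) := by
  rw [kTree, SimpleGraph.fromRel_adj] at h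
  exact h.2

lemma ktree_adj' {u v : List (Fin k)} (h : (∃ j : Fin k, u = j :: v)) :
    (kTree k).Adj u v := by
  rw [kTree, SimpleGraph.fromRel_adj]
  obtain ⟨j, hj⟩ := h
  refine ⟨?_, Or.inl ⟨j, hj⟩⟩
  intro he
  rw [he] at hj
  exact List.cons_ne_self j v hj.symm

/-- the edge position of a dart : the `edgeIdx` of its deeper endpoint -/
def dmax (d : (kTree k).Dart) : ℕ := max (edgeIdx d.fst) (edgeIdx d.snd)

lemma edgeIdx_cons (j : Fin k) (v : List (Fin k)) :
    edgeIdx (j :: v) = edgeIdx v + (j : ℕ) + 1 := rfl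

lemma dmax_pos (d : (kTree k).Dart) : 1 ≤ dmax d := by
  rcases ktree_adj d.adj with ⟨j, hj⟩ | ⟨j, hj⟩
  · have : edgeIdx d.fst = edgeIdx d.snd + j + 1 := by rw [hj]; rfl
    unfold dmax; omega
  · have : edgeIdx d.snd = edgeIdx d.fst + j + 1 := by rw [hj]; rfl
    unfold dmax; omega

lemma color_lift (S : ℕ → ℕ) (u v : List (Fin k)) (h : v.length < u.length) :
    derivedColoring k S s(u, v) = S (edgeIdx u) := by
  unfold derivedColoring
  rw [Sym2.lift_mk]
  simp only
  rw [if_pos h]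

lemma color_dart (S : ℕ → ℕ) (d : (kTree k).Dart) :
    derivedColoring k S d.edge = S (dmax d) := by
  have he : d.edge = s(d.fst, d.snd) := rfl
  rcases ktree_adj d.adj with ⟨j, hj⟩ | ⟨j, hj⟩
  · have h1 : edgeIdx d.fst = edgeIdx d.snd + j + 1 := by rw [hj]; rfl
    have hlen : d.snd.length < d.fst.length := by rw [hj]; simp
    rw [he, color_lift S _ _ hlen]
    unfold dmax
    congr 1
    omega
  · have h1 : edgeIdx d.snd = edgeIdx d.fst + j + 1 := by rw [hj]; rfl
    have hlen : d.fst.length < d.snd.length := by rw [hj]; simp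
    rw [he]
    unfold derivedColoring
    rw [Sym2.lift_mk]
    simp only
    rw [if_neg (by omega), if_pos hlen]
    unfold dmax
    congr 1
    omega

lemma rel_upup (d e : (kTree k).Dart) (hconn : d.snd = e.fst)
    (hU1 : ∃ j : Fin k, d.fst = j :: d.snd) (hU2 : ∃ j : Fin k, e.fst = j :: e.snd) :
    dmax e < dmax d ∧ dmax d ≤ dmax e + k := by
  obtain ⟨j, hj⟩ := hU1
  obtain ⟨j', hj'⟩ := hU2
  have h1 : edgeIdx d.fst = edgeIdx d.snd + j + 1 := by rw [hj]; rfl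
  have h2 : edgeIdx e.fst = edgeIdx e.snd + j' + 1 := by rw [hj']; rfl
  have h3 : edgeIdx e.fst = edgeIdx d.snd := by rw [hconn]
  have hjk := j.isLt
  have hj'k := j'.isLt
  unfold dmax
  omega

lemma rel_dndn (d e : (kTree k).Dart) (hconn : d.snd = e.fst)
    (hD1 : ∃ j : Fin k, d.snd = j :: d.fst) (hD2 : ∃ j : Fin k, e.snd = j :: e.fst) :
    dmax d < dmax e ∧ dmax e ≤ dmax d + k := by
  obtain ⟨j, hj⟩ := hD1
  obtain ⟨j', hj'⟩ := hD2
  have h1 : edgeIdx d.snd = edgeIdx d.fst + j + 1 := by rw [hj]; rfl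
  have h2 : edgeIdx e.snd = edgeIdx e.fst + j' + 1 := by rw [hj']; rfl
  have h3 : edgeIdx e.fst = edgeIdx d.snd := by rw [hconn]
  have hjk := j.isLt
  have hj'k := j'.isLt
  unfold dmax
  omega

lemma no_dnup (d e : (kTree k).Dart) (hconn : d.snd = e.fst) (hne : d.edge ≠ e.edge)
    (hD1 : ∃ j : Fin k, d.snd = j :: d.fst) (hU2 : ∃ j : Fin k, e.fst = j :: e.snd) :
    False := by
  obtain ⟨j, hj⟩ := hD1
  obtain ⟨j', hj'⟩ := hU2
  rw [← hconn] at hj'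
  rw [hj'] at hj
  obtain ⟨hj1, hj2⟩ := List.cons.injEq .. ▸ hj  -- j' :: e.snd = j :: d.fst
  apply hne
  have h1 : d.edge = s(d.fst, d.snd) := rfl
  have h2 : e.edge = s(e.fst, e.snd) := rfl
  rw [h1, h2, ← hconn, ← hj2]
  exact Sym2.eq_swap

lemma rel_updn (d e : (kTree k).Dart) (hconn : d.snd = e.fst) (hne : d.edge ≠ e.edge)
    (hU1 : ∃ j : Fin k, d.fst = j :: d.snd) (hD2 : ∃ j : Fin k, e.snd = j :: e.fst) :
    dmax d ≠ dmax e ∧ dmax e < dmax d + k ∧ dmax d < dmax e + k := by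
  obtain ⟨j, hj⟩ := hU1
  obtain ⟨j', hj'⟩ := hD2
  have h1 : edgeIdx d.fst = edgeIdx d.snd + j + 1 := by rw [hj]; rfl
  have h2 : edgeIdx e.snd = edgeIdx e.fst + j' + 1 := by rw [hj']; rfl
  have h3 : edgeIdx e.fst = edgeIdx d.snd := by rw [hconn]
  have hjne : (j : ℕ) ≠ (j' : ℕ) := by
    intro hjj
    have hjj' : j = j' := Fin.ext hjj
    apply hne
    have e1 : d.edge = s(d.fst, d.snd) := rfl
    have e2 : e.edge = s(e.fst, e.snd) := rfl
    rw [e1, e2, ← hconn]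
    have : e.snd = d.fst := by rw [hj', ← hconn, ← hjj', ← hj]
    rw [this]
    exact Sym2.eq_swap
  have hjk := j.isLt
  have hj'k := j'.isLt
  unfold dmax
  omega

end Tree

def tm : ℕ → Bool
  | 0 => false
  | (n+1) => Bool.xor (tm ((n+1)/2)) ((n+1) % 2 == 1)
decreasing_by exact Nat.div_lt_self (Nat.succ_pos n) one_lt_two

lemma tm_two (n : ℕ) : tm (2*n) = tm n := by
  cases n with
  | zero => rfl
  | succ n =>
    rw [show 2*(n+1) = (2*n+1)+1 from by ring, tm]
    have h1 : (2*n+1+1)/2 = n+1 := by omega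
    have h2 : (2*n+1+1) % 2 = 0 := by omega
    rw [h1, h2]
    simp

lemma tm_two1 (n : ℕ) : tm (2*n+1) = !(tm n) := by
  rw [tm]
  have h1 : (2*n+1)/2 = n := by omega
  have h2 : (2*n+1) % 2 = 1 := by omega
  rw [h1, h2]
  cases tm n <;> simp

lemma bool_not_ne {a b : Bool} (h : (!a) ≠ b) : a = b := by
  cases a <;> cases b <;> first | rfl | exact absurd rfl h

lemma bool_chain {a b c d : Bool} (h1 : a ≠ b) (h2 : b ≠ c) (h3 : c ≠ d) (h4 : a = d) :
    False := by
  cases a <;> cases b <;> cases c <;> cases d <;>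
    first | exact h1 rfl | exact h2 rfl | exact h3 rfl | exact Bool.noConfusion h4

lemma no_aaa (p : ℕ) : ¬ (tm p = tm (p+1) ∧ tm (p+1) = tm (p+2)) := by
  rintro ⟨h1, h2⟩
  rcases Nat.even_or_odd p with ⟨n, hn⟩ | ⟨n, hn⟩
  · rw [show p = 2*n from by omega] at h1
    rw [show 2*n+1 = 2*n+1 from rfl] at h1
    rw [tm_two, tm_two1] at h1
    cases tm n <;> simp_all
  · rw [show p = 2*n+1 from by omega, show 2*n+1+1 = 2*(n+1) from by ring] at h2
    rw [show 2*n+1+2 = 2*(n+1)+1 from by ring] at h2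
    rw [tm_two, tm_two1] at h2
    cases tm (n+1) <;> simp_all

lemma double_odd {x : ℕ} (h : tm x = tm (x+1)) : x % 2 = 1 := by
  by_contra hx
  have : x % 2 = 0 := by omega
  obtain ⟨n, hn⟩ : ∃ n, x = 2*n := ⟨x/2, by omega⟩
  subst hn
  rw [tm_two, tm_two1] at h
  cases tm n <;> simp_all

/-- no overlaps in the Thue-Morse word -/
lemma no_overlap : ∀ L, 1 ≤ L → ∀ p, ¬ (∀ j ≤ L, tm (p + j) = tm (p + j + L)) := by
  intro L
  induction L using Nat.strong_induction_on with
  | _ L ih =>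
  intro hL p hov
  rcases Nat.even_or_odd L with ⟨L', hL'⟩ | ⟨L', hL'⟩
  · -- L = 2 L'
    have hL'' : L = 2 * L' := by omega
    have hL'1 : 1 ≤ L' := by omega
    rcases Nat.even_or_odd p with ⟨q, hq⟩ | ⟨q, hq⟩
    · refine ih L' (by omega) hL'1 q ?_
      intro j hj
      have h := hov (2*j) (by omega)
      rw [show p + 2*j + L = 2*(q+j+L') from by omega,
          show p + 2*j = 2*(q+j) from by omega, tm_two, tm_two] at h
      exact h
    · refine ih L' (by omega) hL'1 q ?_
      intro j hj
      have h := hov (2*j) (by omega)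
      rw [show p + 2*j + L = 2*(q+j+L')+1 from by omega,
          show p + 2*j = 2*(q+j)+1 from by omega, tm_two1, tm_two1] at h
      simpa using h
  · -- L odd
    rcases Nat.lt_or_ge L 3 with h3 | h3
    · -- L = 1
      have : L = 1 := by omega
      subst this
      have h1 := hov 0 (by omega)
      have h2 := hov 1 (by omega)
      exact no_aaa p ⟨by simpa using h1, by simpa using h2⟩
    · by_cases hdb : ∃ x, p ≤ x ∧ x ≤ p + L - 1 ∧ tm x = tm (x+1)
      · obtain ⟨x, hx1, hx2, hx3⟩ := hdb
        have o1 := hov (x - p) (by omega)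
        have o2 := hov (x - p + 1) (by omega)
        rw [show p + (x-p) = x from by omega] at o1
        rw [show p + (x - p + 1) + L = x + L + 1 from by omega,
            show p + (x - p + 1) = x + 1 from by omega] at o2
        have hd2 : tm (x + L) = tm (x + L + 1) := by rw [← o1, ← o2]; exact hx3
        have p1 := double_odd hx3
        have p2 := double_odd hd2
        omega
      · push_neg at hdb
        rcases Nat.lt_or_ge L 4 with h4 | h4
        · -- L = 3 : alternation + periodicity
          have hLe : L = 3 := by omega
          subst hLe
          have d0 := hdb p (le_refl p) (by omega)
          have d1 := hdb (p+1) (by omega) (by omega)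
          have d2 := hdb (p+2) (by omega) (by omega)
          have h0 := hov 0 (by omega)
          rw [show p + 0 = p from by omega, show p + 0 + 3 = p + 3 from by omega] at h0
          rw [show p + 1 + 1 = p + 2 from by omega] at d1
          rw [show p + 2 + 1 = p + 3 from by omega] at d2
          exact bool_chain d0 d1 d2 h0
        · -- L ≥ 5 odd : four consecutive non-doubles impossible
          have d0 := hdb p (le_refl p) (by omega)
          have d1 := hdb (p+1) (by omega) (by omega)
          have d2 := hdb (p+2) (by omega) (by omega)
          have d3 := hdb (p+3) (by omega) (by omega)
          rcases Nat.even_or_odd p with ⟨q, hq⟩ | ⟨q, hq⟩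
          · -- odds are p+1 = 2q+1, p+3 = 2q+3
            rw [show p+1+1 = 2*(q+1) from by omega, show p+1 = 2*q+1 from by omega,
                tm_two1, tm_two] at d1
            rw [show p+3+1 = 2*(q+2) from by omega, show p+3 = 2*(q+1)+1 from by omega,
                tm_two1, tm_two] at d3
            exact no_aaa q ⟨bool_not_ne d1, bool_not_ne d3⟩
          · -- odds are p = 2q+1, p+2 = 2q+3
            rw [show p+1 = 2*(q+1) from by omega, show p = 2*q+1 from by omega,
                tm_two1, tm_two] at d0
            rw [show p+2+1 = 2*(q+2) from by omega, show p+2 = 2*(q+1)+1 from by omega,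
                tm_two1, tm_two] at d2
            exact no_aaa q ⟨bool_not_ne d0, bool_not_ne d2⟩

/-- the ternary first-difference word of Thue-Morse (1-indexed) -/
def tw (n : ℕ) : ℕ := if tm (n-1) = tm n then 2 else (if tm n then 0 else 1)

lemma tw_lt (n : ℕ) : tw n < 3 := by unfold tw; split_ifs <;> omega

lemma bool_of_ind {a b : Bool} (h : (if a then (1:ℤ) else 0) = (if b then 1 else 0)) :
    a = b := by
  cases a <;> cases b <;> simp_all

lemma tw_step {x L : ℕ} (h : tw (x+1) = tw (x+L+1)) :
    ((if tm (x+1) then (1:ℤ) else 0) - (if tm x then 1 else 0)) =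
    ((if tm (x+L+1) then (1:ℤ) else 0) - (if tm (x+L) then 1 else 0)) := by
  simp only [tw, Nat.add_sub_cancel] at h
  cases hb1 : tm x <;> cases hb2 : tm (x+1) <;> cases hb3 : tm (x+L) <;>
    cases hb4 : tm (x+L+1) <;> simp_all

lemma tw_sf : SeqSquareFree tw := by
  rintro ⟨p, L, hp, hL, hsq⟩
  set P := p - 1 with hPdef
  set τ : ℕ → ℤ := fun x => if tm x then 1 else 0 with hτ
  have hbd : ∀ x, τ x = 0 ∨ τ x = 1 := by
    intro x; simp only [hτ]; split_ifs <;> simp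
  have key : ∀ x, P ≤ x → x < P + L → τ (x+1) - τ x = τ (x+L+1) - τ (x+L) := by
    intro x h1 h2
    have h := hsq (x - P) (by omega)
    rw [show p + (x-P) = x+1 from by omega, show p + L + (x-P) = x+L+1 from by omega] at h
    exact tw_step h
  have tele : ∀ j, j ≤ L → τ (P + j) - τ P = τ (P + L + j) - τ (P + L) := by
    intro j
    induction j with
    | zero => intro _; simp
    | succ j ih =>
      intro hj
      have ihh := ih (by omega)
      have hk := key (P + j) (by omega) (by omega)
      rw [show P + j + 1 = P + (j+1) from by omega,
          show P + j + L + 1 = P + L + (j+1) from by omega,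
          show P + j + L = P + L + j from by omega] at hk
      linarith
  by_cases hAB : τ (P + L) = τ P
  · refine no_overlap L hL P ?_
    intro j hj
    have h := tele j hj
    have b1 := hbd (P + j)
    have b2 := hbd (P + L + j)
    have hττ : τ (P + j) = τ (P + j + L) := by
      rw [show P + j + L = P + L + j from by omega]; omega
    exact bool_of_ind hττ
  · have t0 := tele L (le_refl L)
    have b1 := hbd P
    have b2 := hbd (P + L)
    have b3 := hbd (P + L + L)
    omega

lemma tw_adj (n : ℕ) (hn : 1 ≤ n) : tw n ≠ tw (n+1) := fun h => con_adj tw_sf hn h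

/-- the 4-letter word : 3 at positions ≡ 1 mod 3, the ternary word elsewhere -/
def fw (p : ℕ) : ℕ := if p % 3 = 1 then 3 else tw (p - (p+2)/3)

lemma fw_le (p : ℕ) : fw p ≤ 3 := by
  unfold fw; split_ifs
  · exact le_refl 3
  · have := tw_lt (p - (p+2)/3); omega

lemma fw_a (p : ℕ) (hp : 1 ≤ p) : fw p ≠ fw (p+1) := by
  unfold fw
  have h3 : p % 3 = 0 ∨ p % 3 = 1 ∨ p % 3 = 2 := by omega
  rcases h3 with h | h | h
  · rw [if_neg (by omega), if_pos (by omega)]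
    have := tw_lt (p - (p+2)/3); omega
  · rw [if_pos h, if_neg (by omega)]
    have := tw_lt (p + 1 - (p+1+2)/3); omega
  · rw [if_neg (by omega), if_neg (by omega)]
    rw [show p + 1 - (p+1+2)/3 = (p - (p+2)/3) + 1 from by omega]
    exact tw_adj _ (by omega)

lemma fw_b (p : ℕ) (hp : 1 ≤ p) : fw p ≠ fw (p+2) := by
  unfold fw
  have h3 : p % 3 = 0 ∨ p % 3 = 1 ∨ p % 3 = 2 := by omega
  rcases h3 with h | h | h
  · rw [if_neg (by omega), if_neg (by omega)]
    rw [show p + 2 - (p+2+2)/3 = (p - (p+2)/3) + 1 from by omega]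
    exact tw_adj _ (by omega)
  · rw [if_pos h, if_neg (by omega)]
    have := tw_lt (p + 2 - (p+2+2)/3); omega
  · rw [if_neg (by omega), if_pos (by omega)]
    have := tw_lt (p - (p+2)/3); omega

lemma pal_reduce {S : ℕ → ℕ} (h2 : ∀ a, 1 ≤ a → S a ≠ S (a+1))
    (h3 : ∀ a, 1 ≤ a → S a ≠ S (a+2)) : SeqPalindromeFree S := by
  rintro ⟨p, L, hp, hL, hpal⟩
  rcases Nat.even_or_odd L with ⟨u, hu⟩ | ⟨u, hu⟩
  · have h := hpal (u-1) (by omega)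
    rw [show p + L - 1 - (u-1) = (p + (u-1)) + 1 from by omega] at h
    exact h2 (p + (u-1)) (by omega) h
  · have hu1 : 1 ≤ u := by omega
    have h := hpal (u-1) (by omega)
    rw [show p + L - 1 - (u-1) = (p + (u-1)) + 2 from by omega] at h
    exact h3 (p + (u-1)) (by omega) h

lemma fw_pf : SeqPalindromeFree fw := pal_reduce fw_a fw_b

lemma fw_sf : SeqSquareFree fw := by
  rintro ⟨p, d, hp, hd, hsq⟩
  rcases Nat.lt_or_ge d 3 with hd3 | hd3
  · interval_cases d
    · exact fw_a p hp (by have h := hsq 0 (by omega); simpa using h)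
    · exact fw_b p hp (by have h := hsq 0 (by omega); simpa using h)
  · obtain ⟨a, ha1, ha2⟩ : ∃ a, a < 3 ∧ (p + a) % 3 = 1 := by
      have h3 : p % 3 = 0 ∨ p % 3 = 1 ∨ p % 3 = 2 := by omega
      rcases h3 with h | h | h
      exacts [⟨1, by omega, by omega⟩, ⟨0, by omega, by omega⟩, ⟨2, by omega, by omega⟩]
    have hda := hsq a (by omega)
    have hslot : fw (p + a) = 3 := by unfold fw; rw [if_pos ha2]
    have hd0 : d % 3 = 0 := by
      by_contra hne
      have hmod : (p + d + a) % 3 ≠ 1 := by omega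
      have he : fw (p + d + a) = tw (p + d + a - (p + d + a + 2)/3) := by
        unfold fw; rw [if_neg hmod]
      have := tw_lt (p + d + a - (p + d + a + 2)/3)
      omega
    have hy0 : ∃ y0, p ≤ y0 ∧ y0 ≤ p + 1 ∧ y0 % 3 ≠ 1 ∧ 2 ≤ y0 ∧
        (p % 3 = 1 → y0 = p + 1) ∧ (p % 3 ≠ 1 → y0 = p) := by
      by_cases h : p % 3 = 1
      · exact ⟨p + 1, by omega, by omega, by omega, by omega, by omega, by omega⟩
      · exact ⟨p, by omega, by omega, by omega, by omega, by omega, by omega⟩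
    obtain ⟨y0, hy1, hy2, hy3, hy4, hy5, hy6⟩ := hy0
    refine tw_sf ⟨y0 - (y0+2)/3, 2*(d/3), by omega, by omega, ?_⟩
    intro j hj
    have hyf : ∀ x : ℕ, (x + (x+1)/2) % 3 ≠ 1 ∧ (x + (x+1)/2) - ((x + (x+1)/2)+2)/3 = x := by
      intro x; omega
    set P := y0 - (y0+2)/3 with hPdef
    set y := (P + j) + ((P + j)+1)/2 with hydef
    have hr1 : p ≤ y := by omega
    have hr2 : y < p + d := by omega
    have h := hsq (y - p) (by omega)
    rw [show p + (y - p) = y from by omega, show p + d + (y - p) = y + d from by omega] at h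
    unfold fw at h
    obtain ⟨m1, i1⟩ := hyf (P + j)
    rw [if_neg (by omega), if_neg (by omega)] at h
    rw [show y - (y+2)/3 = P + j from by omega,
        show y + d - (y+d+2)/3 = P + 2*(d/3) + j from by omega] at h
    exact h

section Extract
variable {k : ℕ}

lemma derived_nonrep (hk : 1 ≤ k) (SS : ℕ → ℕ) {α : Type*} (T : ℕ → α)
    (hcomp : ∀ x y : ℕ, SS x = SS y → T x = T y)
    (hKS : KSpecialInf k T) : NonrepEdgeColoring (kTree k) (derivedColoring k SS) := by
  classical
  intro u v p hpath hbad
  obtain ⟨w, hw, hrep⟩ := hbad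
  set D := p.darts with hD
  set n := D.length with hn
  set r := w.length with hr
  have hr1 : 1 ≤ r := List.length_pos_iff.mpr hw
  have hedges : p.edges = D.map SimpleGraph.Dart.edge := rfl
  have hlen_e : p.edges.length = n := by rw [hedges]; simp [hn]
  have hlen : n = 2 * r := by
    have h := congrArg List.length hrep
    simp only [List.length_map, List.length_append] at h
    rw [hlen_e] at h
    omega
  have hn1 : 0 < n := by omega
  have hD0 : D ≠ [] := by
    intro h
    rw [h] at hn
    simp at hn
    omega
  set d₀ : (kTree k).Dart := D.head hD0 with hd₀
  set dt : ℕ → (kTree k).Dart := fun t => D.getD t d₀ with hdt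
  set ι : ℕ → ℕ := fun t => dmax (dt (t-1)) with hι
  have hget : ∀ t (ht : t < n), dt t = D[t]'(by omega) := by
    intro t ht
    exact List.getD_eq_getElem D d₀ (by omega)
  -- consecutive darts share a vertex
  have hconn : ∀ t, t + 1 < n → (dt t).snd = (dt (t+1)).fst := by
    intro t ht
    have hc := SimpleGraph.Walk.isChain_dartAdj_darts p
    have h := List.isChain_iff_getElem.mp hc t (by simp only [← hD, ← hn]; omega)
    rw [hget t (by omega), hget (t+1) ht]
    exact h
  -- consecutive darts have distinct edges
  have hedne : ∀ t, t + 1 < n → (dt t).edge ≠ (dt (t+1)).edge := by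
    intro t ht heq
    have hnodup : (D.map SimpleGraph.Dart.edge).Nodup := by
      rw [← hedges]; exact hpath.isTrail.edges_nodup
    rw [hget t (by omega), hget (t+1) ht] at heq
    have h1 : (D.map SimpleGraph.Dart.edge)[t]'(by simp only [List.length_map]; omega) =
        (D.map SimpleGraph.Dart.edge)[t+1]'(by simp only [List.length_map]; omega) := by
      rw [List.getElem_map, List.getElem_map]
      exact heq
    have := (List.Nodup.getElem_inj_iff hnodup).mp h1
    omega
  -- up darts
  set UpT : ℕ → Prop := fun t => ∃ j : Fin k, (dt t).fst = j :: (dt t).snd with hUpT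
  have hUD : ∀ t, UpT t ∨ (∃ j : Fin k, (dt t).snd = j :: (dt t).fst) := by
    intro t
    exact ktree_adj (dt t).adj
  -- the up-then-down structure
  obtain ⟨M, hMle, hMup, hMdown⟩ :
      ∃ M, M ≤ n ∧ (∀ t, t < M → UpT t) ∧ (∀ t, M ≤ t → t + 1 ≤ n → ¬ UpT t) := by
    by_cases hex : ∃ t, t < n ∧ ¬ UpT t
    · have hf1 := (Nat.find_spec hex).1
      have hf2 := (Nat.find_spec hex).2
      refine ⟨Nat.find hex, by omega, ?_, ?_⟩
      · intro t ht
        have h := Nat.find_min hex ht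
        push_neg at h
        exact h (by omega)
      · intro t h1
        induction t, h1 using Nat.le_induction with
        | base => intro _; exact hf2
        | succ t ht ih =>
          intro h2 hup
          have hdn : ¬ UpT t := ih (by omega)
          have hDn := (hUD t).resolve_left hdn
          exact no_dnup (dt t) (dt (t+1)) (hconn t (by omega)) (hedne t (by omega)) hDn hup
    · push_neg at hex
      exact ⟨n, le_refl n, fun t ht => hex t ht, fun t h1 h2 => by omega⟩
  -- color values along the walk
  have h0 : p.edges.map (derivedColoring k SS) = D.map (fun d => SS (dmax d)) := by
    rw [hedges, List.map_map]
    congr 1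
    funext d
    exact color_dart SS d
  have hrep' : D.map (fun d => SS (dmax d)) = w ++ w := by rw [← h0]; exact hrep
  have hcl : ∀ t, t < n → (w ++ w)[t]? = some (SS (dmax (dt t))) := by
    intro t ht
    rw [← hrep', List.getElem?_eq_getElem (by simp only [List.length_map]; omega),
        List.getElem_map, hget t ht]
  -- the pair condition
  have pairT : ∀ j, 1 ≤ j → j ≤ r → T (ι j) = T (ι (j + r)) := by
    intro j h1 h2
    have e1 := hcl (j-1) (by omega)
    have e2 := hcl (j-1+r) (by omega)
    rw [List.getElem?_append_left (by omega)] at e1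
    rw [List.getElem?_append_right (by omega), show j-1+r-w.length = j-1 from by
        rw [← hr]; omega] at e2
    have hSS : SS (dmax (dt (j-1))) = SS (dmax (dt (j-1+r))) := by
      have := e1.symm.trans e2
      exact Option.some.inj this
    have hι1 : ι j = dmax (dt (j-1)) := rfl
    have hι2 : ι (j+r) = dmax (dt (j+r-1)) := rfl
    rw [hι1, hι2, show j+r-1 = j-1+r from by omega]
    exact hcomp _ _ hSS
  -- apply the abstract bad-sequence lemma
  refine badseq k r n hk hr1 hlen T hKS ι pairT (fun j _ _ => dmax_pos _) M hMle ?_ ?_ ?_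
  · -- decreasing part
    intro t h1 h2
    have hc := hconn (t-1) (by omega)
    rw [show t-1+1 = t from by omega] at hc
    have h := rel_upup (dt (t-1)) (dt t) hc (hMup (t-1) (by omega)) (hMup t (by omega))
    exact h
  · -- increasing part
    intro t h1 h2
    have hc := hconn (t-1) (by omega)
    rw [show t-1+1 = t from by omega] at hc
    have hd1 := (hUD (t-1)).resolve_left (hMdown (t-1) (by omega) (by omega))
    have hd2 := (hUD t).resolve_left (hMdown t (by omega) (by omega))
    have h := rel_dndn (dt (t-1)) (dt t) hc hd1 hd2
    exact h
  · -- the turn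
    intro h1 h2
    have hc := hconn (M-1) (by omega)
    rw [show M-1+1 = M from by omega] at hc
    have hu := hMup (M-1) (by omega)
    have hd := (hUD M).resolve_left (hMdown M (le_refl M) (by omega))
    have hne := hedne (M-1) (by omega)
    rw [show M-1+1 = M from by omega] at hne
    have h := rel_updn (dt (M-1)) (dt M) hc hne hu hd
    have hι1 : ι M = dmax (dt (M-1)) := rfl
    have hι2 : ι (M+1) = dmax (dt M) := rfl
    rw [hι1, hι2]
    exact ⟨fun he => h.1 he.symm, h.2.1, h.2.2⟩

end Extract

lemma enc_inj {k a b s t : ℕ} (hk : 0 < k) (hs : s < k) (ht : t < k)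
    (h : a * k + s = b * k + t) : a = b ∧ s = t := by
  have h1 : (a*k+s) % k = s := by
    rw [Nat.add_comm, Nat.add_mul_mod_self_right, Nat.mod_eq_of_lt hs]
  have h2 : (b*k+t) % k = t := by
    rw [Nat.add_comm, Nat.add_mul_mod_self_right, Nat.mod_eq_of_lt ht]
  have h3 : s = t := by rw [← h1, ← h2, h]
  refine ⟨Nat.eq_of_mul_eq_mul_right hk ?_, h3⟩
  omega

lemma tree_bound {k : ℕ} (hk : 1 ≤ k) : thueIdx (kTree k) ≤ 4 * k := by
  set SS : ℕ → ℕ := fun p => fw ((p - 1)/k + 1) * k + (p - 1) % k with hSS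
  have hkpos : 0 < k := hk
  have hcomp : ∀ x y : ℕ, SS x = SS y → blowup k fw x = blowup k fw y := by
    intro x y h
    have h' := enc_inj hkpos (Nat.mod_lt _ hkpos) (Nat.mod_lt _ hkpos) h
    unfold blowup
    rw [Prod.mk.injEq]
    exact ⟨by rw [h'.1], h'.2⟩
  have hKS : KSpecialInf k (blowup k fw) := part1 hk fw_sf fw_pf
  have hnr : NonrepEdgeColoring (kTree k) (derivedColoring k SS) :=
    derived_nonrep hk SS (blowup k fw) hcomp hKS
  have hSSlt : ∀ p, 1 ≤ p → SS p < 4 * k := by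
    intro p hp
    show fw ((p-1)/k + 1) * k + (p-1) % k < 4 * k
    have h2 : fw ((p-1)/k+1) * k ≤ 3 * k := Nat.mul_le_mul_right k (fw_le _)
    have h3 : (p-1) % k < k := Nat.mod_lt _ hkpos
    set A := fw ((p-1)/k+1) * k
    omega
  have hbound : ∀ e ∈ (kTree k).edgeSet, derivedColoring k SS e < 4 * k := by
    intro e he
    induction e using Sym2.ind with
    | _ u v =>
      rw [SimpleGraph.mem_edgeSet] at he
      rcases ktree_adj he with ⟨j, hj⟩ | ⟨j, hj⟩
      · have hlen : v.length < u.length := by rw [hj]; simp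
        rw [color_lift SS u v hlen]
        apply hSSlt
        rw [hj, edgeIdx_cons]; omega
      · have hlen : u.length < v.length := by rw [hj]; simp
        rw [Sym2.eq_swap, color_lift SS v u hlen]
        apply hSSlt
        rw [hj, edgeIdx_cons]; omega
  apply Nat.sInf_le
  exact ⟨derivedColoring k SS, hbound, hnr⟩


/-- If `S` is a square-free and palindrome-free sequence over `q` symbols, then `S^{(k)}`
is `k`-special; consequently, taking `S` square-free and palindrome-free on 4 symbols,
`π'(T_k) ≤ 4k`. -/
theorem stmt14 (k : ℕ) (hk : 1 ≤ k) :
    (∀ (q : ℕ) (S : ℕ → ℕ), (∀ i, 1 ≤ i → S i < q) → SeqSquareFree S →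
      SeqPalindromeFree S → KSpecialInf k (blowup k S)) ∧
    thueIdx (kTree k) ≤ 4 * k := by
  constructor
  · intro q S _ hSF hPF
    exact part1 hk hSF hPF
  · exact tree_bound hk
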